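/- Each of the following holds: (i) G is generated by G(0) together with x_∅, and x_∅ G(0) x_∅^{-1} is a proper subgroup of G(0), so G is a strictly ascending HNN extension of G(0) with stable element x_∅^{-1}; (ii) G_y is generated by G_y(1) together with x_∅, and x_∅^{-1} G_y(1) x_∅ is a proper subgroup of G_y(1), so G_y is a strictly ascending HNN extension of G_y(1) with stable element x_∅; (iii) yG is generated by yG(0) together with x_∅, and x_∅ yG(0) x_∅^{-1} is a proper subgroup of yG(0), so yG is a strictly ascending HNN extension of yG(0) with stable element x_∅^{-1}. -/

import Mathlib

namespace LodhaMoore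

/-- Infinite binary sequences `2^ℕ`. -/
abbrev Seq : Type := ℕ → Bool

/-- The underlying function of the basic bijection `x`:
`00η ↦ 0η`, `01η ↦ 10η`, `1η ↦ 11η` (reading `false` as `0` and `true` as `1`). -/
def xFun (ξ : Seq) : Seq := fun n =>
  if ξ 0 then
    match n with
    | 0 => true
    | 1 => true
    | n+2 => ξ (n+1)
  else if ξ 1 then
    match n with
    | 0 => true
    | 1 => false
    | n+2 => ξ (n+2)
  else
    match n with
    | 0 => false
    | n+1 => ξ (n+2)

/-- The inverse of `xFun`: `0η ↦ 00η`, `10η ↦ 01η`, `11η ↦ 1η`. -/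
def xInv (ξ : Seq) : Seq := fun n =>
  if ξ 0 then
    if ξ 1 then
      match n with
      | 0 => true
      | n+1 => ξ (n+2)
    else
      match n with
      | 0 => false
      | 1 => true
      | n+2 => ξ (n+2)
  else
    match n with
    | 0 => false
    | 1 => false
    | n+2 => ξ (n+1)

/-- `yAux true n ξ` is the `n`-th bit of `ξ.y`, and `yAux false n ξ` is the `n`-th bit of
`ξ.y⁻¹`, where `y` is defined by `00η ↦ 0(η.y)`, `01η ↦ 10(η.y⁻¹)`, `1η ↦ 11(η.y)`,
so `y⁻¹` is given by `0η ↦ 00(η.y⁻¹)`, `10η ↦ 01(η.y)`, `11η ↦ 1(η.y⁻¹)`. -/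
def yAux : Bool → ℕ → Seq → Bool
  | true, 0, ξ => if ξ 0 then true else if ξ 1 then true else false
  | true, 1, ξ => if ξ 0 then true else if ξ 1 then false
      else yAux true 0 (fun k => ξ (k+2))
  | true, n+2, ξ =>
      if ξ 0 then yAux true n (fun k => ξ (k+1))
      else if ξ 1 then yAux false n (fun k => ξ (k+2))
      else yAux true (n+1) (fun k => ξ (k+2))
  | false, 0, ξ => if ξ 0 then (if ξ 1 then true else false) else false
  | false, 1, ξ => if ξ 0 then (if ξ 1 then yAux false 0 (fun k => ξ (k+2)) else true)
      else false
  | false, n+2, ξ =>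
      if ξ 0 then
        (if ξ 1 then yAux false (n+1) (fun k => ξ (k+2))
         else yAux true n (fun k => ξ (k+2)))
      else yAux false n (fun k => ξ (k+1))

lemma yAux_inv (n : ℕ) :
    ∀ ξ : Seq, (yAux false n (fun k => yAux true k ξ) = ξ n) ∧
      (yAux true n (fun k => yAux false k ξ) = ξ n) := by
  induction n using Nat.strong_induction_on with
  | _ n IH =>
    intro ξ
    constructor
    · cases h0 : ξ 0 <;> cases h1 : ξ 1 <;> rcases n with _ | _ | n <;>
        simp [yAux, h0, h1]
      · have e : (fun k => yAux true (k+1) ξ) = fun k => yAux true k (fun j => ξ (j+2)) :=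
          funext fun k => by cases k <;> simp [yAux, h0, h1]
        rw [e]; exact (IH n (by omega) _).1
      · exact (IH n (by omega) _).2
      · intro h2 h3; simp_all
      · exact (IH (n+1) (by omega) _).1
      · exact (IH (n+1) (by omega) _).1
    · cases h0 : ξ 0 <;> cases h1 : ξ 1 <;> rcases n with _ | _ | n <;>
        simp [yAux, h0, h1]
      · exact (IH (n+1) (by omega) _).2
      · cases h2 : ξ 2 <;> simp [h2]
      · exact (IH (n+1) (by omega) _).2
      · exact (IH n (by omega) _).1
      · have e : (fun k => yAux false (k+1) ξ) = fun k => yAux false k (fun j => ξ (j+2)) :=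
          funext fun k => by cases k <;> simp [yAux, h0, h1]
        rw [e]; exact (IH n (by omega) _).2

/-- The basic bijection `x` of `2^ℕ`. -/
def xPerm : Equiv.Perm Seq where
  toFun := xFun
  invFun := xInv
  left_inv := by
    intro ξ
    funext n
    cases h0 : ξ 0 <;> cases h1 : ξ 1 <;>
      rcases n with _ | _ | n <;>
      simp [xFun, xInv, h0, h1]
  right_inv := by
    intro ξ
    funext n
    cases h0 : ξ 0 <;> cases h1 : ξ 1 <;>
      rcases n with _ | _ | n <;>
      simp [xFun, xInv, h0, h1]

/-- The basic bijection `y` of `2^ℕ`. -/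
def yPerm : Equiv.Perm Seq where
  toFun ξ := fun n => yAux true n ξ
  invFun ξ := fun n => yAux false n ξ
  left_inv ξ := funext fun n => (yAux_inv n ξ).1
  right_inv ξ := funext fun n => (yAux_inv n ξ).2

/-- Prepend a finite word to an infinite sequence. -/
def append (s : List Bool) (ξ : Seq) : Seq := fun n =>
  if h : n < s.length then s.get ⟨n, h⟩ else ξ (n - s.length)

/-- Drop the first `k` letters of an infinite sequence. -/
def dropN (k : ℕ) (ξ : Seq) : Seq := fun n => ξ (n + k)

/-- `hasPrefix s ξ` iff the finite word `s` is a prefix of `ξ`. -/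
def hasPrefix (s : List Bool) (ξ : Seq) : Prop := ∀ i : Fin s.length, ξ i = s.get i

instance (s : List Bool) (ξ : Seq) : Decidable (hasPrefix s ξ) := by
  unfold hasPrefix; infer_instance

lemma hasPrefix_append (s : List Bool) (ξ : Seq) : hasPrefix s (append s ξ) := by
  intro i
  simp [append, i.isLt]

lemma dropN_append (s : List Bool) (ξ : Seq) : dropN s.length (append s ξ) = ξ := by
  funext n
  simp [dropN, append, Nat.not_lt.2 (Nat.le_add_left _ _)]

lemma append_dropN {s : List Bool} {ξ : Seq} (h : hasPrefix s ξ) :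
    append s (dropN s.length ξ) = ξ := by
  funext n
  by_cases h' : n < s.length
  · simpa [append, h'] using (h ⟨n, h'⟩).symm
  · simp [append, h', dropN, Nat.sub_add_cancel (Nat.le_of_not_lt h')]

/-- The bijection of `2^ℕ` acting as the bijection `f` "at the address `s`":
`sη ↦ s(η.f)`, and `ξ ↦ ξ` if `s` is not a prefix of `ξ`. -/
def localize (s : List Bool) (f : Equiv.Perm Seq) : Equiv.Perm Seq where
  toFun ξ := if hasPrefix s ξ then append s (f (dropN s.length ξ)) else ξ
  invFun ξ := if hasPrefix s ξ then append s (f.symm (dropN s.length ξ)) else ξ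
  left_inv := by
    intro ξ
    by_cases h : hasPrefix s ξ
    · simp [h, hasPrefix_append, dropN_append, append_dropN h]
    · simp [h]
  right_inv := by
    intro ξ
    by_cases h : hasPrefix s ξ
    · simp [h, hasPrefix_append, dropN_append, append_dropN h]
    · simp [h]

/-- The group of bijections of `2^ℕ`.  Composition is written so that in a product `g * h`
the factor `g` acts first: bijections act on the right, as in Lodha--Moore's paper. -/
abbrev M : Type := (Equiv.Perm Seq)ᵐᵒᵖ

/-- The generator `x_s`, `s ∈ 2^{<ℕ}` (a finite binary sequence, i.e. a `List Bool`). -/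
def px (s : List Bool) : M := MulOpposite.op (localize s xPerm)

/-- The generator `y_s`, `s ∈ 2^{<ℕ}`. -/
def py (s : List Bool) : M := MulOpposite.op (localize s yPerm)

/-- `t` is a word of the form `0^n`, `n ≥ 0`. -/
def allFalse (t : List Bool) : Prop := ∀ b ∈ t, b = false

/-- `t` is a word of the form `1^n`, `n ≥ 0`. -/
def allTrue (t : List Bool) : Prop := ∀ b ∈ t, b = true

instance (t : List Bool) : Decidable (allFalse t) := by unfold allFalse; infer_instance
instance (t : List Bool) : Decidable (allTrue t) := by unfold allTrue; infer_instance

/-- Addresses allowed for the `y`-generators of the Lodha–Moore group `G`. -/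
def gSet : Set (List Bool) := {t | ¬ allFalse t ∧ ¬ allTrue t}
/-- Addresses allowed for the `y`-generators of the Lodha–Moore group `G_y`. -/
def gySet : Set (List Bool) := {t | ¬ allFalse t}
/-- Addresses allowed for the `y`-generators of the Lodha–Moore group `yG`. -/
def ygSet : Set (List Bool) := {t | ¬ allTrue t}
/-- Addresses allowed for the `y`-generators of the Lodha–Moore group `yGy`. -/
def ygySet : Set (List Bool) := Set.univ

/-- The Lodha–Moore style group with `y`-generators allowed at the addresses in `A`. -/
def LM (A : Set (List Bool)) : Subgroup M :=
  Subgroup.closure (Set.range px ∪ py '' A)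

/-- The Lodha–Moore group `G`. -/
def G : Subgroup M := LM gSet
/-- The Lodha–Moore group `G_y`. -/
def Gy : Subgroup M := LM gySet
/-- The Lodha–Moore group `yG`. -/
def yG : Subgroup M := LM ygSet
/-- The Lodha–Moore group `yGy`. -/
def yGy : Subgroup M := LM ygySet

/-- The semi-deferred subgroup `H(s)` of the Lodha–Moore group `H = LM A`: the subgroup
generated by those generators of `H` whose address has `s` as a prefix. -/
def LMdef (A : Set (List Bool)) (s : List Bool) : Subgroup M :=
  Subgroup.closure ((px '' {t | s <+: t}) ∪ (py '' {t | t ∈ A ∧ s <+: t}))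

lemma px_mem (A : Set (List Bool)) (s : List Bool) : px s ∈ LM A :=
  Subgroup.subset_closure (Or.inl ⟨s, rfl⟩)

lemma py_mem {A : Set (List Bool)} {s : List Bool} (h : s ∈ A) : py s ∈ LM A :=
  Subgroup.subset_closure (Or.inr ⟨s, h, rfl⟩)

lemma px_mem_def (A : Set (List Bool)) {s t : List Bool} (h : s <+: t) :
    px t ∈ LMdef A s :=
  Subgroup.subset_closure (Or.inl ⟨t, h, rfl⟩)

lemma py_mem_def {A : Set (List Bool)} {s t : List Bool} (h1 : t ∈ A) (h2 : s <+: t) :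
    py t ∈ LMdef A s :=
  Subgroup.subset_closure (Or.inr ⟨t, ⟨h1, h2⟩, rfl⟩)

/-- The conjugate subgroup `z B z⁻¹`. -/
def conjSubgroup {H : Type*} [Group H] (z : H) (B : Subgroup H) : Subgroup H :=
  B.map (MulAut.conj z).toMonoidHom

/-- The `MulEquiv` `φ.range ≃* ⊤` used to define an ascending HNN extension. -/
noncomputable def ascEquiv {B : Type*} [Group B] (φ : B →* B) (hφ : Function.Injective φ) :
    (φ.range : Subgroup B) ≃* (⊤ : Subgroup B) :=
  (MonoidHom.ofInjective hφ).symm.trans Subgroup.topEquiv.symm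

/-- The ascending HNN extension `B*_{φ,t} = ⟨B, t ∣ t⁻¹ b t = φ(b) for all b ∈ B⟩` of the
group `B` along the injective endomorphism `φ`.  (In `HNNExtension B φ.range ⊤ (ascEquiv φ hφ)`
the defining relation is exactly `t⁻¹ * of b * t = of (φ b)` for all `b : B`.) -/
noncomputable abbrev AscHNN {B : Type*} [Group B] (φ : B →* B)
    (hφ : Function.Injective φ) : Type _ :=
  HNNExtension B φ.range ⊤ (ascEquiv φ hφ)

/-!
Conjugation by `x_∅` carries the cones `00`, `01`, `1` onto `0`, `10`, `11` (keeping tails), so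
it moves the generators `x_u`, `y_u` between these addresses. Starting from `G(0)` and `x_∅`
this reaches every generator with address outside `{∅, 1}`, and `x_1` comes from the identity
`x_0 x_∅ x_1 = x_∅²`. Conjugation maps `G(0)` into `G(00)`, which fixes `010^ω` while `x_0`
does not, so the conjugate is proper. Every element of an ascending HNN extension has the form
`t^m b t^{-n}`, so the canonical map onto the group is injective as soon as no nontrivial power
of the stable element lies in the base; here `G(0)` fixes `10^ω` and no nontrivial power of
`x_∅` does. The decomposition over `G_y(1)` is the mirror image.
-/

open MulOpposite

lemma append_nil (ξ : Seq) : append [] ξ = ξ := by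
  funext n
  simp [append]

lemma append_append (s t : List Bool) (ξ : Seq) :
    append s (append t ξ) = append (s ++ t) ξ := by
  funext n
  by_cases hs : n < s.length
  · simp [append, hs, List.getElem_append_left, show n < s.length + t.length by omega]
  · by_cases ht : n < s.length + t.length
    · simp [append, hs, ht, List.getElem_append_right (Nat.le_of_not_lt hs),
        show n - s.length < t.length by omega]
    · simp [append, hs, ht, show ¬ n - s.length < t.length by omega, Nat.sub_add_eq]

lemma exists_eq_append_cases (ξ : Seq) :
    (∃ η, ξ = append [false, false] η) ∨ (∃ η, ξ = append [false, true] η) ∨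
      ∃ η, ξ = append [true] η := by
  have hp : ∀ s, hasPrefix s ξ → ξ = append s (dropN s.length ξ) :=
    fun s h => (append_dropN h).symm
  cases h0 : ξ 0
  · cases h1 : ξ 1
    · exact .inl ⟨_, hp [false, false] (by simp [hasPrefix, Fin.forall_fin_two, h0, h1])⟩
    · exact .inr (.inl ⟨_, hp [false, true] (by simp [hasPrefix, Fin.forall_fin_two, h0, h1])⟩)
  · exact .inr (.inr ⟨_, hp [true] (by simp [hasPrefix, h0])⟩)

lemma xPerm_append_false_false (s : List Bool) (ξ : Seq) :
    xPerm (append (false :: false :: s) ξ) = append (false :: s) ξ := by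
  funext n
  rcases n with _ | n <;> simp [xPerm, xFun, append]

lemma xPerm_append_false_true (s : List Bool) (ξ : Seq) :
    xPerm (append (false :: true :: s) ξ) = append (true :: false :: s) ξ := by
  funext n
  rcases n with _ | _ | n <;> simp [xPerm, xFun, append]

lemma xPerm_append_true (s : List Bool) (ξ : Seq) :
    xPerm (append (true :: s) ξ) = append (true :: true :: s) ξ := by
  funext n
  rcases n with _ | _ | n <;> simp [xPerm, xFun, append]

lemma localize_append (s : List Bool) (f : Equiv.Perm Seq) (ξ : Seq) :
    localize s f (append s ξ) = append s (f ξ) := by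
  simp [localize, hasPrefix_append, dropN_append]

lemma localize_apply_of_not_hasPrefix {s : List Bool} (f : Equiv.Perm Seq) {ξ : Seq}
    (h : ¬ hasPrefix s ξ) : localize s f ξ = ξ := by
  simp [localize, h]

lemma localize_nil (f : Equiv.Perm Seq) : localize [] f = f :=
  Equiv.ext fun ξ => by simpa [append_nil] using localize_append [] f ξ

lemma localize_cons_append_of_ne {b c : Bool} (h : b ≠ c) (s t : List Bool)
    (f : Equiv.Perm Seq) (ξ : Seq) :
    localize (b :: s) f (append (c :: t) ξ) = append (c :: t) ξ :=
  localize_apply_of_not_hasPrefix f fun hp => h (by simpa [append] using (hp ⟨0, by simp⟩).symm)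

lemma hasPrefix_of_prefix {s t : List Bool} {ξ : Seq} (hst : s <+: t) (h : hasPrefix t ξ) :
    hasPrefix s ξ := by
  obtain ⟨u, rfl⟩ := hst
  intro i
  simpa [List.getElem_append_left i.isLt] using h ⟨i, by simp; omega⟩

lemma px_nil : px [] = op xPerm := by
  rw [px, localize_nil]

lemma conj_localize {u v : List Bool} {Q : Equiv.Perm Seq}
    (h : ∀ ξ, Q (append u ξ) = append v ξ) (f : Equiv.Perm Seq) :
    Q * localize u f * Q⁻¹ = localize v f := by
  refine Equiv.ext fun ξ => ?_
  by_cases hv : hasPrefix v ξ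
  · obtain ⟨η, rfl⟩ : ∃ η, ξ = append v η := ⟨_, (append_dropN hv).symm⟩
    have hQ : Q.symm (append v η) = append u η := by rw [← h, Equiv.symm_apply_apply]
    simp only [Equiv.Perm.mul_apply, Equiv.Perm.inv_def, hQ, localize_append, h]
  · have hu : ¬ hasPrefix u (Q.symm ξ) := fun hu => hv <| by
      rw [← Equiv.apply_symm_apply Q ξ, ← append_dropN hu, h]
      exact hasPrefix_append _ _
    simp only [Equiv.Perm.mul_apply, Equiv.Perm.inv_def, localize_apply_of_not_hasPrefix f hu,
      Equiv.apply_symm_apply, localize_apply_of_not_hasPrefix f hv]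

lemma conj_op_localize {z : M} {u v : List Bool} (h : ∀ ξ, unop z⁻¹ (append u ξ) = append v ξ)
    (f : Equiv.Perm Seq) : z * op (localize u f) * z⁻¹ = op (localize v f) := by
  apply unop_injective
  rw [← conj_localize h f]
  simp [mul_assoc]

lemma px_nil_inv_mul_localize_mul {u v : List Bool}
    (h : ∀ ξ, xPerm (append u ξ) = append v ξ) (f : Equiv.Perm Seq) :
    (px [])⁻¹ * op (localize u f) * px [] = op (localize v f) := by
  simpa using conj_op_localize (z := (px [])⁻¹) (by simpa [px_nil] using h) f

lemma localize_singleton_append_cons (b : Bool) (t : List Bool) (f : Equiv.Perm Seq) (ξ : Seq) :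
    localize [b] f (append (b :: t) ξ) = append [b] (f (append t ξ)) := by
  rw [← localize_append, append_append, List.singleton_append]

lemma localize_true_mul_xPerm_mul_localize_false :
    localize [true] xPerm * xPerm * localize [false] xPerm = xPerm * xPerm := by
  refine Equiv.ext fun ξ => ?_
  obtain ⟨η, rfl⟩ | ⟨η, rfl⟩ | ⟨η, rfl⟩ := exists_eq_append_cases ξ
  on_goal 1 => obtain ⟨η, rfl⟩ | ⟨η, rfl⟩ | ⟨η, rfl⟩ := exists_eq_append_cases η
  all_goals simp [append_append, localize_singleton_append_cons, localize_cons_append_of_ne,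
    xPerm_append_false_false, xPerm_append_false_true, xPerm_append_true]

lemma px_false_mul_px_nil_mul_px_true : px [false] * px [] * px [true] = px [] * px [] := by
  apply unop_injective
  simpa [px, localize_nil, mul_assoc] using localize_true_mul_xPerm_mul_localize_false

lemma forall_ne_nil_of_cone {P : List Bool → Prop} (c : Bool) (hcone : ∀ s, P (c :: s))
    (hsingle : P [!c]) (hswap : ∀ s, P (c :: (!c) :: s) → P ((!c) :: c :: s))
    (hdup : ∀ s, P ((!c) :: s) → P ((!c) :: (!c) :: s)) : ∀ t, t ≠ [] → P t := by
  intro t ht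
  induction t with
  | nil => exact absurd rfl ht
  | cons b s ih =>
    obtain rfl | rfl : b = c ∨ b = !c := by cases b <;> cases c <;> simp
    · exact hcone s
    · match s, ih with
      | [], _ => exact hsingle
      | d :: s, ih =>
        obtain rfl | rfl : d = c ∨ d = !c := by cases d <;> cases c <;> simp
        · exact hswap s (hcone _)
        · exact hdup s (ih (List.cons_ne_nil _ _))

section ConjugationByX

variable {H : Subgroup M}

lemma localize_mem_iff_of_xPerm (hH : px [] ∈ H) {u v : List Bool}
    (h : ∀ ξ, xPerm (append u ξ) = append v ξ) (f : Equiv.Perm Seq) :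
    op (localize u f) ∈ H ↔ op (localize v f) ∈ H := by
  rw [← px_nil_inv_mul_localize_mul h f, H.mul_mem_cancel_right hH,
    H.mul_mem_cancel_left (inv_mem hH)]

lemma localize_swap_mem_iff (hH : px [] ∈ H) (c : Bool) (s : List Bool) (f : Equiv.Perm Seq) :
    op (localize (c :: (!c) :: s) f) ∈ H ↔ op (localize ((!c) :: c :: s) f) ∈ H := by
  cases c
  · exact localize_mem_iff_of_xPerm hH (xPerm_append_false_true s) f
  · exact (localize_mem_iff_of_xPerm hH (xPerm_append_false_true s) f).symm

lemma localize_dup_mem_iff (hH : px [] ∈ H) (c : Bool) (s : List Bool) (f : Equiv.Perm Seq) :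
    op (localize ((!c) :: s) f) ∈ H ↔ op (localize ((!c) :: (!c) :: s) f) ∈ H := by
  cases c
  · exact localize_mem_iff_of_xPerm hH (xPerm_append_true s) f
  · exact (localize_mem_iff_of_xPerm hH (xPerm_append_false_false s) f).symm

lemma px_false_mem_iff_px_true_mem (hH : px [] ∈ H) : px [false] ∈ H ↔ px [true] ∈ H := by
  have h : px [false] * px [] * px [true] ∈ H := by
    rw [px_false_mul_px_nil_mul_px_true]; exact mul_mem hH hH
  constructor
  · exact fun h0 => (H.mul_mem_cancel_left (mul_mem h0 hH)).1 h
  · exact fun h1 => (H.mul_mem_cancel_right hH).1 ((H.mul_mem_cancel_right h1).1 h)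

end ConjugationByX

lemma LMdef_le_LM (A : Set (List Bool)) (s : List Bool) : LMdef A s ≤ LM A := by
  refine (Subgroup.closure_le _).2 ?_
  rintro g (⟨t, -, rfl⟩ | ⟨t, ⟨ht, -⟩, rfl⟩)
  · exact px_mem A t
  · exact py_mem ht

theorem closure_LMdef_union_px_nil (A : Set (List Bool)) (c : Bool)
    (hswapA : ∀ s, c :: (!c) :: s ∈ A) (hdupA : ∀ s, (!c) :: (!c) :: s ∈ A → (!c) :: s ∈ A)
    (hnil : [] ∉ A) (hsingle : [!c] ∉ A) :
    Subgroup.closure ((LMdef A [c] : Set M) ∪ {px []}) = LM A := by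
  set H := Subgroup.closure ((LMdef A [c] : Set M) ∪ {px []})
  have hx : px [] ∈ H := Subgroup.subset_closure (.inr rfl)
  have hB : ∀ g ∈ LMdef A [c], g ∈ H := fun g hg => Subgroup.subset_closure (.inl hg)
  have hpx : ∀ t, px t ∈ H := by
    intro t
    rcases eq_or_ne t [] with rfl | ht
    · exact hx
    refine forall_ne_nil_of_cone (P := fun t => px t ∈ H) c
      (fun s => hB _ (px_mem_def A ⟨s, rfl⟩)) ?_
      (fun s => (localize_swap_mem_iff hx c s xPerm).1)
      (fun s => (localize_dup_mem_iff hx c s xPerm).1) t ht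
    have := hB _ (px_mem_def A (List.prefix_refl [c]))
    cases c
    · exact (px_false_mem_iff_px_true_mem hx).1 this
    · exact (px_false_mem_iff_px_true_mem hx).2 this
  have hpy : ∀ t ∈ A, py t ∈ H := by
    intro t htA
    refine forall_ne_nil_of_cone (P := fun t => t ∈ A → py t ∈ H) c
      (fun s hs => hB _ (py_mem_def hs ⟨s, rfl⟩)) (fun h => absurd h hsingle)
      (fun s _ _ => (localize_swap_mem_iff hx c s yPerm).1 (hB _ (py_mem_def (hswapA s) ⟨_, rfl⟩)))
      (fun s ih hs => (localize_dup_mem_iff hx c s yPerm).1 (ih (hdupA s hs)))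
      t (ne_of_mem_of_not_mem htA hnil) htA
  refine le_antisymm ((Subgroup.closure_le _).2 ?_) ((Subgroup.closure_le _).2 ?_)
  · rintro g (hg | rfl)
    · exact LMdef_le_LM A [c] hg
    · exact px_mem A []
  · rintro g (⟨t, rfl⟩ | ⟨t, ht, rfl⟩)
    · exact hpx t
    · exact hpy t ht

lemma LMdef_anti (A : Set (List Bool)) {s t : List Bool} (h : s <+: t) : LMdef A t ≤ LMdef A s := by
  refine (Subgroup.closure_le _).2 ?_
  rintro g (⟨u, hu, rfl⟩ | ⟨u, ⟨huA, hu⟩, rfl⟩)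
  · exact px_mem_def A (h.trans hu)
  · exact py_mem_def huA (h.trans hu)

lemma LMdef_le_stabilizer (A : Set (List Bool)) {s : List Bool} {p : Seq}
    (h : ¬ hasPrefix s p) : LMdef A s ≤ (MulAction.stabilizer (Equiv.Perm Seq) p).op := by
  have key : ∀ t f, s <+: t → op (localize t f) ∈ (MulAction.stabilizer (Equiv.Perm Seq) p).op :=
    fun t f hst => localize_apply_of_not_hasPrefix f fun ht => h (hasPrefix_of_prefix hst ht)
  refine (Subgroup.closure_le _).2 ?_
  rintro g (⟨t, ht, rfl⟩ | ⟨t, ⟨-, ht⟩, rfl⟩)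
  · exact key t xPerm ht
  · exact key t yPerm ht

lemma conjSubgroup_LMdef_le (A : Set (List Bool)) {z : M} {s s' : List Bool}
    (hz : ∀ ξ, unop z⁻¹ (append s ξ) = append s' ξ) (hA : ∀ w, s ++ w ∈ A → s' ++ w ∈ A) :
    conjSubgroup z (LMdef A s) ≤ LMdef A s' := by
  have hzw : ∀ w ξ, unop z⁻¹ (append (s ++ w) ξ) = append (s' ++ w) ξ := fun w ξ => by
    rw [← append_append, hz, append_append]
  rw [conjSubgroup, Subgroup.map_le_iff_le_comap]
  refine (Subgroup.closure_le _).2 ?_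
  rintro g (⟨t, ⟨w, rfl⟩, rfl⟩ | ⟨t, ⟨htA, ⟨w, rfl⟩⟩, rfl⟩)
  · show z * px (s ++ w) * z⁻¹ ∈ LMdef A s'
    rw [px, conj_op_localize (hzw w)]
    exact px_mem_def A ⟨w, rfl⟩
  · show z * py (s ++ w) * z⁻¹ ∈ LMdef A s'
    rw [py, conj_op_localize (hzw w)]
    exact py_mem_def (hA w htA) ⟨w, rfl⟩

lemma px_singleton_not_mem_LMdef (A : Set (List Bool)) (c : Bool) : px [c] ∉ LMdef A [c, c] := by
  set p : Seq := append [c, !c, c] fun _ => false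
  intro h
  have hfix := LMdef_le_stabilizer A (p := p) (by cases c <;> simp [hasPrefix, p, append]) h
  rw [Subgroup.mem_op, MulAction.mem_stabilizer_iff, Equiv.Perm.smul_def] at hfix
  change localize [c] xPerm (append (c :: [!c, c]) _) = p at hfix
  rw [localize_singleton_append_cons] at hfix
  cases c
  · have := congrFun hfix 2
    simp [p, xPerm_append_true, append] at this
  · have := congrFun hfix 1
    simp [p, xPerm_append_false_true, append] at this

lemma LMdef_lt_LMdef_singleton (A : Set (List Bool)) (c : Bool) :
    LMdef A [c, c] < LMdef A [c] :=
  SetLike.lt_iff_le_and_exists.2 ⟨LMdef_anti A ⟨[c], rfl⟩, px [c],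
    px_mem_def A (List.prefix_refl _), px_singleton_not_mem_LMdef A c⟩

namespace AscHNN

open HNNExtension

variable {B : Type*} [Group B] (φ : B →* B) (hφ : Function.Injective φ)

lemma ascEquiv_symm_apply (b : (⊤ : Subgroup B)) :
    (((ascEquiv φ hφ).symm b : φ.range) : B) = φ b := by
  simp [ascEquiv, MonoidHom.ofInjective_apply]

lemma of_mul_t (b : B) : (of b : AscHNN φ hφ) * t = t * of (φ b) := by
  simpa [ascEquiv_symm_apply] using HNNExtension.of_mul_t (φ := ascEquiv φ hφ) ⟨b, trivial⟩

lemma inv_t_mul_of (b : B) : (t : AscHNN φ hφ)⁻¹ * of b = of (φ b) * t⁻¹ := by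
  simpa [ascEquiv_symm_apply] using HNNExtension.inv_t_mul_of (φ := ascEquiv φ hφ) ⟨b, trivial⟩

lemma of_mul_t_pow (b : B) (k : ℕ) :
    (of b : AscHNN φ hφ) * t ^ k = t ^ k * of (φ^[k] b) := by
  induction k with
  | zero => simp
  | succ k ih =>
    rw [pow_succ, ← mul_assoc, ih, mul_assoc, of_mul_t, Function.iterate_succ_apply', mul_assoc]

lemma exists_eq_t_pow_mul_of_mul_inv (g : AscHNN φ hφ) :
    ∃ (m n : ℕ) (b : B), g = t ^ m * of b * (t ^ n)⁻¹ := by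
  let NF : AscHNN φ hφ → Prop := fun g => ∃ (m n : ℕ) (b : B), g = t ^ m * of b * (t ^ n)⁻¹
  have hof : ∀ b g, NF g → NF (of b * g) := by
    rintro b _ ⟨m, n, b', rfl⟩
    refine ⟨m, n, φ^[m] b * b', ?_⟩
    rw [map_mul, ← mul_assoc, ← mul_assoc, of_mul_t_pow, mul_assoc (t ^ m)]
  have ht : ∀ g, NF g → NF (t * g) := by
    rintro _ ⟨m, n, b, rfl⟩
    exact ⟨m + 1, n, b, by rw [pow_succ']; group⟩
  have ht_inv : ∀ g, NF g → NF (t⁻¹ * g) := by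
    rintro _ ⟨_ | m, n, b, rfl⟩
    · refine ⟨0, n + 1, φ b, ?_⟩
      rw [pow_zero, one_mul, ← mul_assoc, inv_t_mul_of, pow_succ']
      group
    · exact ⟨m, n, b, by rw [pow_succ']; group⟩
  have key : ∀ g : AscHNN φ hφ, (∀ y, NF y → NF (g * y)) ∧ (∀ y, NF y → NF (g⁻¹ * y)) := by
    intro g
    induction g using HNNExtension.induction_on with
    | of b => exact ⟨hof b, by simpa only [← map_inv] using hof b⁻¹⟩
    | t => exact ⟨ht, ht_inv⟩
    | mul g g' hg hg' =>
      exact ⟨fun y hy => by simpa only [mul_assoc] using hg.1 _ (hg'.1 y hy),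
        fun y hy => by simpa only [mul_inv_rev, mul_assoc] using hg'.2 _ (hg.2 y hy)⟩
    | inv g hg => exact ⟨hg.2, by simpa only [inv_inv] using hg.1⟩
  simpa using (key g).1 1 ⟨0, 0, 1, by simp⟩

end AscHNN

theorem exists_mulEquiv_ascHNN {G : Type*} [Group G] {K B : Subgroup G} {ζ : G}
    (hgen : Subgroup.closure ((B : Set G) ∪ {ζ}) = K) (hpow : ∀ k : ℤ, ζ ^ k ∈ B → k = 0)
    (φ : B →* B) (hφ : ∀ b, (φ b : G) = ζ⁻¹ * b * ζ) (hinj : Function.Injective φ) :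
    ∃ Φ : AscHNN φ hinj ≃* K,
      (∀ b, (Φ (HNNExtension.of b) : G) = b) ∧ (Φ HNNExtension.t : G) = ζ := by
  have hx : ∀ a : φ.range, ζ * B.subtype a = B.subtype (ascEquiv φ hinj a) * ζ := by
    intro a
    obtain ⟨b, rfl⟩ := (ascEquiv φ hinj).symm.surjective a
    simp [AscHNN.ascEquiv_symm_apply, hφ, mul_assoc]
  set Ψ := HNNExtension.lift B.subtype ζ hx
  have hrange : Ψ.range = K := by
    rw [← hgen]
    refine le_antisymm ?_ ((Subgroup.closure_le _).2 ?_)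
    · rintro _ ⟨g, rfl⟩
      induction g using HNNExtension.induction_on with
      | of b =>
        rw [HNNExtension.lift_of]
        exact Subgroup.subset_closure (.inl b.2)
      | t =>
        rw [HNNExtension.lift_t]
        exact Subgroup.subset_closure (.inr rfl)
      | mul g g' hg hg' => simpa using mul_mem hg hg'
      | inv g hg => simpa using inv_mem hg
    · rintro g (hg | rfl)
      · exact ⟨HNNExtension.of ⟨g, hg⟩, by simp [Ψ]⟩
      · exact ⟨HNNExtension.t, by simp [Ψ]⟩
  have hinjΨ : Function.Injective Ψ := by
    rw [injective_iff_map_eq_one]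
    intro g hg
    obtain ⟨m, n, b, rfl⟩ := AscHNN.exists_eq_t_pow_mul_of_mul_inv φ hinj g
    simp only [map_mul, map_pow, map_inv, HNNExtension.lift_of, HNNExtension.lift_t, Ψ,
      Subgroup.coe_subtype] at hg
    have hb : (b : G) = ζ ^ ((n : ℤ) - m) := by
      rw [zpow_sub, zpow_natCast, zpow_natCast]
      calc (b : G) = (ζ ^ m)⁻¹ * (ζ ^ m * b * (ζ ^ n)⁻¹) * ζ ^ n := by group
        _ = _ := by rw [hg]; group
    obtain rfl : n = m := by have := hpow _ (hb ▸ b.2); omega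
    obtain rfl : b = 1 := Subtype.ext (by simpa using hb)
    simp
  refine ⟨(MonoidHom.ofInjective hinjΨ).trans (MulEquiv.subgroupCongr hrange), ?_, ?_⟩ <;>
    simp [Ψ, MonoidHom.ofInjective_apply]

lemma eq_zero_of_zpow_mem {G : Type*} [Group G] {S : Subgroup G} {g : G}
    (h : ∀ n : ℕ, g ^ (n + 1) ∉ S) {k : ℤ} (hk : g ^ k ∈ S) : k = 0 := by
  rcases k with (_ | n) | n
  · rfl
  · exact absurd (by simpa [← zpow_natCast] using hk) (h n)
  · exact absurd (by simpa [zpow_negSucc] using hk) (h n)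

lemma xPerm_apply_of_head {ξ : Seq} (h : ξ 0 = true) :
    xPerm ξ = append [true, true] (dropN 1 ξ) := by
  funext n
  rcases n with _ | _ | n <;> simp [xPerm, xFun, append, dropN, h]

lemma xPerm_pow_apply_head (n : ℕ) {ξ : Seq} (h : ξ 0 = true) : (xPerm ^ n) ξ 0 = true := by
  induction n with
  | zero => exact h
  | succ n ih => rw [pow_succ', Equiv.Perm.mul_apply, xPerm_apply_of_head ih]; rfl

lemma xPerm_pow_succ_apply_one (n : ℕ) {ξ : Seq} (h : ξ 0 = true) :
    (xPerm ^ (n + 1)) ξ 1 = true := by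
  rw [pow_succ', Equiv.Perm.mul_apply, xPerm_apply_of_head (xPerm_pow_apply_head n h)]
  rfl

lemma px_nil_zpow_mem_LMdef (A : Set (List Bool)) (c : Bool) {k : ℤ}
    (h : px [] ^ k ∈ LMdef A [c]) : k = 0 := by
  set p : Seq := append [!c, c] fun _ => false
  have hfix := LMdef_le_stabilizer A (p := p) (by cases c <;> simp [hasPrefix, p, append]) h
  refine eq_zero_of_zpow_mem (fun n hn => ?_) hfix
  rw [Subgroup.mem_op, MulAction.mem_stabilizer_iff, Equiv.Perm.smul_def, unop_pow, px_nil,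
    unop_op] at hn
  cases c
  · have := xPerm_pow_succ_apply_one n (ξ := p) rfl
    rw [hn] at this
    simp [p, append] at this
  · have := xPerm_pow_apply_head n (ξ := xPerm p) (by simp [p, xPerm_append_false_true [], append])
    rw [← Equiv.Perm.mul_apply, ← pow_succ, hn] at this
    simp [p, append] at this

theorem hnn_decomposition_LMdef_false (A : Set (List Bool))
    (hswapA : ∀ s, false :: true :: s ∈ A) (hdupA : ∀ s, true :: true :: s ∈ A → true :: s ∈ A)
    (hnil : [] ∉ A) (hsingle : [true] ∉ A)
    (hconjA : ∀ s, false :: s ∈ A → false :: false :: s ∈ A) :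
    Subgroup.closure ((LMdef A [false] : Set M) ∪ {px []}) = LM A ∧
      conjSubgroup (px []) (LMdef A [false]) < LMdef A [false] ∧
      ∀ (φ : LMdef A [false] →* LMdef A [false])
        (_ : ∀ b : LMdef A [false], (φ b : M) = px [] * (b : M) * (px [])⁻¹)
        (hinj : Function.Injective φ),
        ∃ Φ : AscHNN φ hinj ≃* LM A,
          (∀ b : LMdef A [false], (Φ (HNNExtension.of b) : M) = (b : M)) ∧
          (Φ HNNExtension.t : M) = (px [])⁻¹ := by
  have hgen := closure_LMdef_union_px_nil A false hswapA hdupA hnil hsingle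
  refine ⟨hgen, lt_of_le_of_lt ?_ (LMdef_lt_LMdef_singleton A false), fun φ hφ hinj => ?_⟩
  · refine conjSubgroup_LMdef_le A (fun ξ => ?_) hconjA
    rw [px_nil, ← op_inv, unop_op, Equiv.Perm.inv_eq_iff_eq]
    exact (xPerm_append_false_false [] ξ).symm
  · refine exists_mulEquiv_ascHNN ?_ (fun k hk => ?_) φ (by simpa using hφ) hinj
    · rw [Subgroup.closure_union, Subgroup.closure_singleton_inv, ← Subgroup.closure_union, hgen]
    · rw [inv_zpow'] at hk
      exact neg_eq_zero.1 (px_nil_zpow_mem_LMdef A false hk)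

theorem hnn_decomposition_LMdef_true (A : Set (List Bool))
    (hswapA : ∀ s, true :: false :: s ∈ A) (hdupA : ∀ s, false :: false :: s ∈ A → false :: s ∈ A)
    (hnil : [] ∉ A) (hsingle : [false] ∉ A)
    (hconjA : ∀ s, true :: s ∈ A → true :: true :: s ∈ A) :
    Subgroup.closure ((LMdef A [true] : Set M) ∪ {px []}) = LM A ∧
      conjSubgroup (px [])⁻¹ (LMdef A [true]) < LMdef A [true] ∧
      ∀ (φ : LMdef A [true] →* LMdef A [true])
        (_ : ∀ b : LMdef A [true], (φ b : M) = (px [])⁻¹ * (b : M) * px [])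
        (hinj : Function.Injective φ),
        ∃ Φ : AscHNN φ hinj ≃* LM A,
          (∀ b : LMdef A [true], (Φ (HNNExtension.of b) : M) = (b : M)) ∧
          (Φ HNNExtension.t : M) = px [] := by
  have hgen := closure_LMdef_union_px_nil A true hswapA hdupA hnil hsingle
  refine ⟨hgen, lt_of_le_of_lt ?_ (LMdef_lt_LMdef_singleton A true), fun φ hφ hinj => ?_⟩
  · refine conjSubgroup_LMdef_le A (fun ξ => ?_) hconjA
    rw [inv_inv, px_nil, unop_op]
    exact xPerm_append_true [] ξ
  · exact exists_mulEquiv_ascHNN hgen (fun k => px_nil_zpow_mem_LMdef A true) φ hφ hinj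

/-- (i) `G` is a strictly ascending HNN extension of `G(0)` with stable element `x_∅⁻¹`;
(ii) `G_y` is a strictly ascending HNN extension of `G_y(1)` with stable element `x_∅`;
(iii) `yG` is a strictly ascending HNN extension of `yG(0)` with stable element `x_∅⁻¹`.
In each case the base is generated together with `x_∅` to give the whole group, the
conjugate of the base by the stable element is a proper subgroup of the base, and there
is an isomorphism with the abstract ascending HNN extension fixing the base pointwise
and sending `t` to the stable element. -/
theorem more_F_like_hnn_decompositions :
    -- (i) G over G(0), stable element x_∅⁻¹
    (Subgroup.closure ((LMdef gSet [false] : Set M) ∪ {px []}) = G ∧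
      conjSubgroup (px []) (LMdef gSet [false]) < LMdef gSet [false] ∧
      ∀ (φ : ↥(LMdef gSet [false]) →* ↥(LMdef gSet [false]))
        (_ : ∀ b : ↥(LMdef gSet [false]), (φ b : M) = px [] * (b : M) * (px [])⁻¹)
        (hinj : Function.Injective φ),
        ∃ Φ : AscHNN φ hinj ≃* ↥G,
          (∀ b : ↥(LMdef gSet [false]), (Φ (HNNExtension.of b) : M) = (b : M)) ∧
          (Φ HNNExtension.t : M) = (px [])⁻¹) ∧
    -- (ii) G_y over G_y(1), stable element x_∅
    (Subgroup.closure ((LMdef gySet [true] : Set M) ∪ {px []}) = Gy ∧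
      conjSubgroup (px [])⁻¹ (LMdef gySet [true]) < LMdef gySet [true] ∧
      ∀ (φ : ↥(LMdef gySet [true]) →* ↥(LMdef gySet [true]))
        (_ : ∀ b : ↥(LMdef gySet [true]), (φ b : M) = (px [])⁻¹ * (b : M) * px [])
        (hinj : Function.Injective φ),
        ∃ Φ : AscHNN φ hinj ≃* ↥Gy,
          (∀ b : ↥(LMdef gySet [true]), (Φ (HNNExtension.of b) : M) = (b : M)) ∧
          (Φ HNNExtension.t : M) = px []) ∧
    -- (iii) yG over yG(0), stable element x_∅⁻¹
    (Subgroup.closure ((LMdef ygSet [false] : Set M) ∪ {px []}) = yG ∧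
      conjSubgroup (px []) (LMdef ygSet [false]) < LMdef ygSet [false] ∧
      ∀ (φ : ↥(LMdef ygSet [false]) →* ↥(LMdef ygSet [false]))
        (_ : ∀ b : ↥(LMdef ygSet [false]), (φ b : M) = px [] * (b : M) * (px [])⁻¹)
        (hinj : Function.Injective φ),
        ∃ Φ : AscHNN φ hinj ≃* ↥yG,
          (∀ b : ↥(LMdef ygSet [false]), (Φ (HNNExtension.of b) : M) = (b : M)) ∧
          (Φ HNNExtension.t : M) = (px [])⁻¹) := by
  refine ⟨hnn_decomposition_LMdef_false gSet ?_ ?_ ?_ ?_ ?_,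
    hnn_decomposition_LMdef_true gySet ?_ ?_ ?_ ?_ ?_,
    hnn_decomposition_LMdef_false ygSet ?_ ?_ ?_ ?_ ?_⟩ <;>
    simp [gSet, gySet, ygSet, allFalse, allTrue]

end LodhaMoore
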